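/- arXiv:2209.06658 — 3 statements merged into one kernel-verified Lean document; each statement's English description precedes it below -/
import Mathlib

section
/- Let q be a power of an odd prime, Tr the trace from F_{q^n} to F_q, and for c ∈ F_{q^n}* define the quadratic form Q_c : F_{q^n} → F_q by Q_c(x) = Tr(c·x·Tr(x)). Then the radical of Q_c (with respect to the associated symmetric bilinear form B_c(x,y) = Tr(y·(Tr(cx) + c·Tr(x)))) has F_q-dimension n−1 if c ∈ F_q*, and dimension n−2 if c ∈ F_{q^n} \ F_q. -/
/-- The symmetric bilinear form associated to the quadratic form
`Q_c(x) = Tr(c·x·Tr(x))`, namely `B_c(x,y) = Tr(y·(Tr(cx) + c·Tr(x)))`. -/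
noncomputable def bilinB (Fq Fqn : Type) [Field Fq] [Field Fqn] [Fintype Fq] [Fintype Fqn]
    [Algebra Fq Fqn] (c x y : Fqn) : Fq :=
  Algebra.trace Fq Fqn
    (y * (algebraMap Fq Fqn (Algebra.trace Fq Fqn (c * x)) +
      c * algebraMap Fq Fqn (Algebra.trace Fq Fqn x)))

/-!
The trace form `(a, b) ↦ Tr(ab)` is nondegenerate, so `x` lies in the radical of `B_c` exactly
when `Tr(cx) + c·Tr(x) = 0` in `F_{q^n}`. If `Tr x ≠ 0` this equation puts `c` in `F_q`, and then
it reads `2c·Tr x = 0`, impossible in odd characteristic. Hence the radical is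
`{x | Tr x = Tr(cx) = 0}`, the trace-orthogonal complement of `span {1, c}`, whose dimension is
`n - 1` or `n - 2` according as `1, c` are dependent or independent over `F_q`.
-/

open Module Submodule

theorem LinearMap.BilinForm.mem_orthogonal_span_pair_iff {K V : Type*} [Field K] [AddCommGroup V]
    [Module K V] (B : LinearMap.BilinForm K V) {a b x : V} :
    x ∈ B.orthogonal (span K {a, b}) ↔ B a x = 0 ∧ B b x = 0 := by
  change span K {a, b} ≤ LinearMap.ker (B.flip x) ↔ _
  rw [span_le, Set.insert_subset_iff, Set.singleton_subset_iff]
  rfl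

theorem Module.finrank_eq_of_card_eq_pow {K V : Type*} [Field K] [Fintype K] [AddCommGroup V]
    [Module K V] [Fintype V] {n : ℕ} (h : Fintype.card V = Fintype.card K ^ n) :
    finrank K V = n :=
  Nat.pow_right_injective Fintype.one_lt_card ((card_eq_pow_finrank (K := K) (V := V)).symm.trans h)

theorem FiniteField.two_ne_zero_of_odd_card {F : Type*} [Field F] [Fintype F]
    (h : Odd (Fintype.card F)) : (2 : F) ≠ 0 :=
  Ring.two_ne_zero fun h2 => Nat.not_even_iff_odd.2 h (Nat.even_iff.2 (even_card_of_char_two h2))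

section Algebra

variable {K L : Type*} [Field K] [Ring L] [Nontrivial L] [Algebra K L]

theorem finrank_span_one_pair_of_mem_range {c : L} (hc : c ∈ Set.range (algebraMap K L)) :
    finrank K (span K {1, c}) = 1 := by
  obtain ⟨c, rfl⟩ := hc
  have hc1 : algebraMap K L c ∈ span K {1} := by
    rw [Algebra.algebraMap_eq_smul_one]
    exact smul_mem _ _ (mem_span_singleton_self 1)
  rw [Set.pair_comm, span_insert_eq_span hc1]
  exact finrank_span_singleton one_ne_zero

theorem finrank_span_one_pair_of_notMem_range {c : L} (hc : c ∉ Set.range (algebraMap K L)) :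
    finrank K (span K {1, c}) = 2 := by
  have hindep : LinearIndependent K ![1, c] :=
    (LinearIndependent.pair_iff' one_ne_zero).2 fun a hac =>
      hc ⟨a, by rw [Algebra.algebraMap_eq_smul_one, hac]⟩
  have := finrank_span_eq_card hindep
  rwa [Matrix.range_cons_cons_empty, Fintype.card_fin] at this

end Algebra

section Trace

variable {K L : Type*} [Field K] [Field L] [Algebra K L]

local notation "Tr" => Algebra.trace K L

theorem mem_traceForm_orthogonal_span_one_pair_iff {c x : L} :
    x ∈ (Algebra.traceForm K L).orthogonal (span K {1, c}) ↔ Tr x = 0 ∧ Tr (c * x) = 0 := by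
  rw [LinearMap.BilinForm.mem_orthogonal_span_pair_iff, Algebra.traceForm_apply,
    Algebra.traceForm_apply, one_mul]

theorem trace_eq_zero_and_trace_mul_eq_zero_iff {c : L} (hc : c ≠ 0) (h2 : (2 : K) ≠ 0)
    (x : L) :
    Tr x = 0 ∧ Tr (c * x) = 0 ↔
      algebraMap K L (Tr (c * x)) + c * algebraMap K L (Tr x) = 0 := by
  refine ⟨fun ⟨hx, hcx⟩ => by simp [hx, hcx], fun h => ?_⟩
  have hx : Tr x = 0 := by
    by_contra hx
    obtain ⟨c₀, rfl⟩ : c ∈ Set.range (algebraMap K L) := ⟨-Tr (c * x) / Tr x, by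
      rw [map_div₀, map_neg, div_eq_iff (by simpa using hx)]
      linear_combination -h⟩
    rw [← Algebra.smul_def, map_smul, smul_eq_mul, ← map_mul, ← map_add,
      map_eq_zero, ← two_mul, ← mul_assoc] at h
    have hc₀ : c₀ ≠ 0 := by rintro rfl; exact hc (map_zero _)
    exact hx ((mul_eq_zero.1 h).resolve_left (mul_ne_zero h2 hc₀))
  exact ⟨hx, by simpa [hx] using h⟩

variable [FiniteDimensional K L] [Algebra.IsSeparable K L]

theorem finrank_traceForm_orthogonal (W : Submodule K L) :
    finrank K ((Algebra.traceForm K L).orthogonal W) = finrank K L - finrank K W :=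
  LinearMap.BilinForm.finrank_orthogonal (traceForm_nondegenerate K L) W

end Trace

theorem forall_bilinB_eq_zero_iff {Fq Fqn : Type} [Field Fq] [Field Fqn] [Fintype Fq] [Fintype Fqn]
    [Algebra Fq Fqn] (c x : Fqn) :
    (∀ y, bilinB Fq Fqn c x y = 0) ↔
      algebraMap Fq Fqn (Algebra.trace Fq Fqn (c * x)) +
        c * algebraMap Fq Fqn (Algebra.trace Fq Fqn x) = 0 := by
  refine ⟨fun h => (traceForm_nondegenerate Fq Fqn).2 _ h, fun h y => ?_⟩
  rw [bilinB, h, mul_zero, map_zero]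

theorem radical_dim_general (p s n : ℕ) (hp : Odd p)
    (q : ℕ) (hq : q = p ^ s)
    (Fq Fqn : Type) [Field Fq] [Field Fqn] [Fintype Fq] [Fintype Fqn] [Algebra Fq Fqn]
    (hcard : Fintype.card Fq = q) (hcardn : Fintype.card Fqn = q ^ n)
    (c : Fqn) (hc : c ≠ 0)
    (W : Submodule Fq Fqn)
    (hW : ∀ x : Fqn, x ∈ W ↔ ∀ y : Fqn, bilinB Fq Fqn c x y = 0) :
    (c ∈ Set.range (algebraMap Fq Fqn) → Module.finrank Fq W = n - 1) ∧
    (c ∉ Set.range (algebraMap Fq Fqn) → Module.finrank Fq W = n - 2) := by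
  have h2 : (2 : Fq) ≠ 0 := FiniteField.two_ne_zero_of_odd_card (hcard ▸ hq ▸ hp.pow)
  have hW_orth : W = (Algebra.traceForm Fq Fqn).orthogonal (span Fq {1, c}) := by
    ext x
    rw [hW, forall_bilinB_eq_zero_iff, ← trace_eq_zero_and_trace_mul_eq_zero_iff hc h2,
      mem_traceForm_orthogonal_span_one_pair_iff]
  rw [hW_orth, finrank_traceForm_orthogonal, finrank_eq_of_card_eq_pow (hcard ▸ hcardn)]
  exact ⟨fun h => by rw [finrank_span_one_pair_of_mem_range h],
    fun h => by rw [finrank_span_one_pair_of_notMem_range h]⟩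

theorem radical_dim (p s n : ℕ) [Fact p.Prime] (hp : Odd p) (hs : 0 < s) (hn : 0 < n)
    (q : ℕ) (hq : q = p ^ s)
    (Fq Fqn : Type) [Field Fq] [Field Fqn] [Fintype Fq] [Fintype Fqn] [Algebra Fq Fqn]
    (hcard : Fintype.card Fq = q) (hcardn : Fintype.card Fqn = q ^ n)
    (c : Fqn) (hc : c ≠ 0)
    (W : Submodule Fq Fqn)
    (hW : ∀ x : Fqn, x ∈ W ↔ ∀ y : Fqn, bilinB Fq Fqn c x y = 0) :
    (c ∈ Set.range (algebraMap Fq Fqn) → Module.finrank Fq W = n - 1) ∧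
    (c ∉ Set.range (algebraMap Fq Fqn) → Module.finrank Fq W = n - 2) :=
  radical_dim_general p s n hp q hq Fq Fqn hcard hcardn c hc W hW
end

section
/- Let q be a power of an odd prime, d a divisor of q^n − 1, a ∈ F_{q^n}*, b ∈ F_{q^n}, and χ_d a multiplicative character of F_{q^n}* of order d with Gauss sums G_n(χ) = Σ_{x∈F_{q^n}*} χ(x)ψ(x). Then the number of F_{q^n}-points on y^d = a·x·Tr(x) + b equals q^n + (1/q^n) Σ_{ℓ=1}^{d−1} G_n(χ_d^ℓ) Σ_{c ∈ F_{q^n}*} ψ(cb)·(conj χ_d)^ℓ(−c)·Σ_{x ∈ F_{q^n}} ψ(c·a·x·Tr(x)). -/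
/-- The canonical additive character `ψ(x) = exp(2πi·Tr_{F/F_p}(x)/p)`. -/
noncomputable def psiC (p : ℕ) [Fact p.Prime] (F : Type) [Field F] [Fintype F] [CharP F p]
    (x : F) : ℂ :=
  letI : Algebra (ZMod p) F := ZMod.algebra F p
  Complex.exp (2 * Real.pi * Complex.I * ((Algebra.trace (ZMod p) F x).val : ℂ) / p)

/-- The Gauss sum `G(χ) = Σ_{x} χ(x)·ψ(x)` (recall `χ(0)=0`). -/
noncomputable def gaussSum' (p : ℕ) [Fact p.Prime] (F : Type) [Field F] [Fintype F] [CharP F p]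
    (χ : MulChar F ℂ) : ℂ :=
  ∑ x : F, χ x * psiC p F x

/-- The number of `F_{q^n}`-rational points on the affine curve `y^d = a·x·Tr(x) + b`. -/
noncomputable def curveCard (Fq Fqn : Type) [Field Fq] [Field Fqn] [Fintype Fq] [Fintype Fqn]
    [Algebra Fq Fqn] (d : ℕ) (a b : Fqn) : ℕ :=
  Nat.card {xy : Fqn × Fqn //
    xy.2 ^ d = a * xy.1 * algebraMap Fq Fqn (Algebra.trace Fq Fqn xy.1) + b}


/-!
For `u ∈ F` the equation `y^d = u` has `1 + Σ_{ℓ=1}^{d-1} χ^ℓ(u)` solutions, because on the cyclic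
group `Fˣ` the kernel of a character of order `d` is the subgroup of `d`-th powers. For
`1 ≤ ℓ < d` the character `χ^ℓ` is nontrivial, and Gauss-sum inversion
`G(χ) · Σ_c ψ(c u) χ̄(-c) = χ(u) · |F|` turns `χ^ℓ(u)` into additive characters. Summing over `x`
with `u = a x Tr(x) + b` and factoring `ψ(c u) = ψ(c b) ψ(c a x Tr(x))` gives the formula.
-/

open Finset

lemma natCard_subtype_prod_eq_sum_card_filter {α β : Type*} [Fintype α] [Fintype β]
    (P : α → β → Prop) [∀ x, DecidablePred (P x)] :
    Nat.card {xy : α × β // P xy.1 xy.2} = ∑ x, #{y | P x y} := by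
  rw [Nat.card_eq_fintype_card, Fintype.card_congr (Equiv.subtypeProdEquivSigmaSubtype P),
    Fintype.card_sigma]
  simp only [Fintype.card_subtype]

lemma FiniteField.card_filter_pow_eq_of_pow_eq {F : Type*} [Field F] [Fintype F] [DecidableEq F]
    {d : ℕ} (hd : d ∣ Fintype.card F - 1) {u v : F} (hu : u ≠ 0) (hv : v ^ d = u) :
    #{y | y ^ d = u} = d := by
  have hcard : 0 < Fintype.card F - 1 := Nat.sub_pos_of_lt Fintype.one_lt_card
  have hd0 : 0 < d := Nat.pos_of_dvd_of_pos hd hcard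
  obtain ⟨g, hg⟩ := IsCyclic.exists_generator (α := Fˣ)
  have hgprim : IsPrimitiveRoot (g : F) (Fintype.card F - 1) := by
    rw [IsPrimitiveRoot.coe_units_iff, ← Fintype.card_units, ← Nat.card_eq_fintype_card,
      ← orderOf_eq_card_of_forall_mem_zpowers hg]
    exact IsPrimitiveRoot.orderOf g
  obtain ⟨e, he⟩ := hd
  have hζ : IsPrimitiveRoot ((g : F) ^ e) d := hgprim.pow hcard (by rw [he, mul_comm])
  have hfilter : ({y | y ^ d = u} : Finset F) = (Polynomial.nthRoots d u).toFinset := by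
    ext y
    simp [Polynomial.mem_nthRoots hd0]
  rw [hfilter, Multiset.toFinset_card_of_nodup (hζ.nthRoots_nodup hu), hζ.nthRoots_eq hv,
    Multiset.card_map, Multiset.card_range]

namespace MulChar

lemma orderOf_apply_generator {M R : Type*} [CommMonoid M] [CommMonoidWithZero R]
    {g : Mˣ} (hg : ∀ x, x ∈ Subgroup.zpowers g) (χ : MulChar M R) :
    orderOf (χ g) = orderOf χ :=
  orderOf_eq_orderOf_iff.mpr fun m ↦ by
    rw [eq_iff hg, pow_apply_coe, one_apply_coe]

variable {F : Type*} [Field F] [Fintype F]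

lemma apply_eq_one_iff_exists_pow_orderOf_eq {R : Type*} [CommRing R] (χ : MulChar F R) {u : F}
    (hu : u ≠ 0) : χ u = 1 ↔ ∃ v, v ^ orderOf χ = u := by
  constructor
  · intro h
    obtain ⟨g, hg⟩ := IsCyclic.exists_generator (α := Fˣ)
    obtain ⟨k, hk⟩ := mem_powers_iff_mem_zpowers.mpr (hg (Units.mk0 u hu))
    have hk' : (g : F) ^ k = u := by simpa using congrArg Units.val hk
    have hdvd : orderOf χ ∣ k := by
      rw [← orderOf_apply_generator hg, orderOf_dvd_iff_pow_eq_one, ← map_pow, hk', h]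
    obtain ⟨m, rfl⟩ := hdvd
    exact ⟨(g : F) ^ m, by rw [← pow_mul, mul_comm, hk']⟩
  · rintro ⟨v, rfl⟩
    have hv : v ≠ 0 := by rintro rfl; exact hu (zero_pow χ.orderOf_pos.ne')
    rw [map_pow, ← pow_apply' χ χ.orderOf_pos.ne', pow_orderOf_eq_one,
      one_apply hv.isUnit]

lemma sum_range_orderOf_pow_apply {R : Type*} [Field R] [DecidableEq R] (χ : MulChar F R) {u : F}
    (hu : u ≠ 0) :
    ∑ ℓ ∈ range (orderOf χ), (χ ^ ℓ) u = if χ u = 1 then (orderOf χ : R) else 0 := by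
  have hpow (ℓ : ℕ) : (χ ^ ℓ) u = χ u ^ ℓ := by
    simpa using pow_apply_coe χ ℓ (Units.mk0 u hu)
  simp_rw [hpow]
  split_ifs with h
  · simp [h]
  · rw [geom_sum_eq h, ← pow_apply' χ χ.orderOf_pos.ne', pow_orderOf_eq_one,
      one_apply hu.isUnit, sub_self, zero_div]

lemma card_filter_pow_orderOf_eq [DecidableEq F] {R : Type*} [Field R] (χ : MulChar F R) (u : F) :
    (#{y | y ^ orderOf χ = u} : R) = 1 + ∑ ℓ ∈ Icc 1 (orderOf χ - 1), (χ ^ ℓ) u := by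
  classical
  have hd0 := χ.orderOf_pos
  rcases eq_or_ne u 0 with rfl | hu
  · have hroots : ({y | y ^ orderOf χ = 0} : Finset F) = {0} := by
      ext y
      simp [pow_eq_zero_iff hd0.ne']
    rw [hroots]
    simp
  have hsum :
      ∑ ℓ ∈ range (orderOf χ), (χ ^ ℓ) u = 1 + ∑ ℓ ∈ Icc 1 (orderOf χ - 1), (χ ^ ℓ) u := by
    have hIco : Ico 1 (orderOf χ) = Icc 1 (orderOf χ - 1) := by ext; simp; omega
    rw [range_eq_Ico, sum_eq_sum_Ico_succ_bot hd0, pow_zero, one_apply hu.isUnit, hIco]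
  rw [← hsum, χ.sum_range_orderOf_pow_apply hu]
  split_ifs with h
  · obtain ⟨v, hv⟩ := (χ.apply_eq_one_iff_exists_pow_orderOf_eq hu).mp h
    rw [FiniteField.card_filter_pow_eq_of_pow_eq χ.orderOf_dvd_card_sub_one hu hv]
  · have hnone : ({y | y ^ orderOf χ = u} : Finset F) = ∅ := by
      ext y
      simpa using fun hy ↦ h ((χ.apply_eq_one_iff_exists_pow_orderOf_eq hu).mpr ⟨y, hy⟩)
    simp [hnone]

end MulChar

section GaussSum

variable {F : Type*} [Field F] [Fintype F]

lemma sum_addChar_mul_conj_eq_gaussSum (χ : MulChar F ℂ) (ψ : AddChar F ℂ) (u : F) :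
    ∑ c, ψ (c * u) * starRingEnd ℂ (χ (-c)) = gaussSum χ⁻¹ (ψ⁻¹.mulShift u) := by
  refine Fintype.sum_equiv (Equiv.neg F) _ _ fun c ↦ ?_
  simp [starRingEnd_apply, MulChar.star_apply', AddChar.inv_apply, mul_comm]

lemma gaussSum_mul_sum_addChar_mul_conj {χ : MulChar F ℂ} (hχ : χ ≠ 1) {ψ : AddChar F ℂ}
    (hψ : ψ.IsPrimitive) (u : F) :
    gaussSum χ ψ * ∑ c, ψ (c * u) * starRingEnd ℂ (χ (-c)) = χ u * Fintype.card F := by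
  rw [sum_addChar_mul_conj_eq_gaussSum]
  rcases eq_or_ne u 0 with rfl | hu
  · rw [AddChar.mulShift_zero, gaussSum_one_right (inv_ne_one.mpr hχ), MulChar.map_zero,
      mul_zero, zero_mul]
  · rw [show u = (Units.mk0 u hu : F) from rfl, gaussSum_mulShift_eq, inv_inv, mul_left_comm,
      gaussSum_mul_gaussSum_eq_card hχ hψ]

lemma sum_apply_add_eq_gaussSum_mul {χ : MulChar F ℂ} (hχ : χ ≠ 1) {ψ : AddChar F ℂ}
    (hψ : ψ.IsPrimitive) (g : F → F) (b : F) :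
    ∑ x, χ (g x + b) = (Fintype.card F : ℂ)⁻¹ * (gaussSum χ ψ *
      ∑ c, ψ (c * b) * starRingEnd ℂ (χ (-c)) * ∑ x, ψ (c * g x)) := by
  have hcard : (Fintype.card F : ℂ) ≠ 0 := Nat.cast_ne_zero.mpr Fintype.card_ne_zero
  calc ∑ x, χ (g x + b)
      = ∑ x, (Fintype.card F : ℂ)⁻¹ *
          (gaussSum χ ψ * ∑ c, ψ (c * (g x + b)) * starRingEnd ℂ (χ (-c))) := by
        refine sum_congr rfl fun x _ ↦ ?_
        rw [gaussSum_mul_sum_addChar_mul_conj hχ hψ, mul_comm, mul_inv_cancel_right₀ hcard]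
    _ = (Fintype.card F : ℂ)⁻¹ * (gaussSum χ ψ *
          ∑ c, ∑ x, ψ (c * b) * starRingEnd ℂ (χ (-c)) * ψ (c * g x)) := by
        rw [← mul_sum, ← mul_sum, sum_comm]
        refine congrArg _ (congrArg _ (sum_congr rfl fun c _ ↦ sum_congr rfl fun x _ ↦ ?_))
        rw [mul_add, AddChar.map_add_eq_mul]
        ring
    _ = _ := by simp_rw [mul_sum]

end GaussSum

theorem MulChar.card_pow_orderOf_eq_gauss_expansion {F : Type*} [Field F] [Fintype F]
    (χ : MulChar F ℂ) {ψ : AddChar F ℂ} (hψ : ψ.IsPrimitive) (g : F → F) (b : F) :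
    (Nat.card {xy : F × F // xy.2 ^ orderOf χ = g xy.1 + b} : ℂ) =
      Fintype.card F + (Fintype.card F : ℂ)⁻¹ * ∑ ℓ ∈ Icc 1 (orderOf χ - 1), gaussSum (χ ^ ℓ) ψ *
        ∑ c, ψ (c * b) * starRingEnd ℂ ((χ ^ ℓ) (-c)) * ∑ x, ψ (c * g x) := by
  classical
  rw [natCard_subtype_prod_eq_sum_card_filter (fun x y ↦ y ^ orderOf χ = g x + b), Nat.cast_sum]
  rw [sum_congr rfl fun x _ ↦ χ.card_filter_pow_orderOf_eq (g x + b)]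
  rw [sum_add_distrib, sum_const, card_univ, nsmul_one, sum_comm, mul_sum]
  refine congrArg _ (sum_congr rfl fun ℓ hℓ ↦ ?_)
  have hχℓ : χ ^ ℓ ≠ 1 := by
    rw [mem_Icc] at hℓ
    exact pow_ne_one_of_lt_orderOf (by omega) (by omega)
  exact sum_apply_add_eq_gaussSum_mul hχℓ hψ g b

section CanonicalAddChar

variable (p : ℕ) [Fact p.Prime] (F : Type) [Field F] [Fintype F] [CharP F p]

noncomputable def psiAddChar : AddChar F ℂ :=
  letI : Algebra (ZMod p) F := ZMod.algebra F p
  ZMod.stdAddChar.compAddMonoidHom (Algebra.trace (ZMod p) F).toAddMonoidHom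

lemma psiAddChar_apply (x : F) : psiAddChar p F x = psiC p F x := by
  simp [psiAddChar, psiC, ZMod.stdAddChar_apply, ZMod.toCircle_apply]

lemma psiAddChar_isPrimitive : (psiAddChar p F).IsPrimitive := by
  let : Algebra (ZMod p) F := ZMod.algebra F p
  refine AddChar.IsPrimitive.of_ne_one (AddChar.ne_one_iff.mpr ?_)
  obtain ⟨x, hx⟩ : ∃ x : F, Algebra.trace (ZMod p) F x ≠ 0 := by
    obtain rfl : ringChar F = p := ringChar.eq F p
    obtain ⟨x, hx⟩ := FiniteField.trace_to_zmod_nondegenerate F (a := 1) one_ne_zero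
    exact ⟨x, by simpa using hx⟩
  refine ⟨x, fun h ↦ hx (ZMod.injective_stdAddChar ?_)⟩
  rw [AddChar.map_zero_eq_one]
  exact h

lemma gaussSum_psiAddChar (χ : MulChar F ℂ) : gaussSum χ (psiAddChar p F) = gaussSum' p F χ := by
  simp only [gaussSum, gaussSum', psiAddChar_apply]

end CanonicalAddChar

theorem curve_card_gauss_expansion_general (p n : ℕ) [Fact p.Prime] (q : ℕ)
    (Fq Fqn : Type) [Field Fq] [Field Fqn] [Fintype Fq] [Fintype Fqn] [Algebra Fq Fqn]
    [CharP Fqn p]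
    (hcardn : Fintype.card Fqn = q ^ n) (d : ℕ) (a : Fqn) (b : Fqn)
    (χ : MulChar Fqn ℂ) (hχ : orderOf χ = d) :
    (curveCard Fq Fqn d a b : ℂ)
      = (q : ℂ) ^ n + ((q : ℂ) ^ n)⁻¹ *
        ∑ ℓ ∈ Finset.Icc 1 (d - 1), gaussSum' p Fqn (χ ^ ℓ) *
          ∑ c : Fqn,  -- χ^ℓ(0) = 0, so this equals the sum over c ≠ 0
            psiC p Fqn (c * b) * (starRingEnd ℂ) ((χ ^ ℓ) (-c)) *
              ∑ x : Fqn, psiC p Fqn (c * a * x * algebraMap Fq Fqn (Algebra.trace Fq Fqn x)) := by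
  subst hχ
  have hcardC : (Fintype.card Fqn : ℂ) = (q : ℂ) ^ n := by rw [hcardn, Nat.cast_pow]
  rw [curveCard, χ.card_pow_orderOf_eq_gauss_expansion (psiAddChar_isPrimitive p Fqn)
    (fun x ↦ a * x * algebraMap Fq Fqn (Algebra.trace Fq Fqn x)) b, hcardC]
  simp only [gaussSum_psiAddChar, psiAddChar_apply, mul_assoc]

theorem curve_card_gauss_expansion (p s n : ℕ) [Fact p.Prime] (hp : Odd p) (hs : 0 < s)
    (hn : 0 < n) (q : ℕ) (hq : q = p ^ s)
    (Fq Fqn : Type) [Field Fq] [Field Fqn] [Fintype Fq] [Fintype Fqn] [Algebra Fq Fqn]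
    [CharP Fqn p]
    (hcard : Fintype.card Fq = q) (hcardn : Fintype.card Fqn = q ^ n)
    (d : ℕ) (hd : d ∣ q ^ n - 1) (a : Fqn) (ha : a ≠ 0) (b : Fqn)
    (χ : MulChar Fqn ℂ) (hχ : orderOf χ = d) :
    (curveCard Fq Fqn d a b : ℂ)
      = (q : ℂ) ^ n + ((q : ℂ) ^ n)⁻¹ *
        ∑ ℓ ∈ Finset.Icc 1 (d - 1), gaussSum' p Fqn (χ ^ ℓ) *
          ∑ c : Fqn,  -- χ^ℓ(0) = 0, so this equals the sum over c ≠ 0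
            psiC p Fqn (c * b) * (starRingEnd ℂ) ((χ ^ ℓ) (-c)) *
              ∑ x : Fqn, psiC p Fqn (c * a * x * algebraMap Fq Fqn (Algebra.trace Fq Fqn x)) :=
  curve_card_gauss_expansion_general p n q Fq Fqn hcardn d a b χ hχ
end

section
/- Let q = p^s with p an odd prime, n odd, χ₂ the quadratic character of F_{q^n}*, a ∈ F_{q^n}*, b ∈ F_{q^n} with Tr(b/a) = 0, and τ = 1 if p ≡ 1 (mod 4), τ = i if p ≡ 3 (mod 4). Then the number of F_{q^n}-points on y² = a·x·Tr(x) + b equals q^n + q^{n−1}χ₂(b) + τ^{(n+1)s}·χ₂(−a)·(q−1)·q^{(n−1)/2}. -/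
/-- `τ = 1` if `p ≡ 1 (mod 4)`, `τ = i` if `p ≡ 3 (mod 4)`. -/
noncomputable def tauC (p : ℕ) : ℂ := if p % 4 = 1 then 1 else Complex.I

/-!
Write `K = F_q ⊆ L = F_{q^n}`, `χ_K`, `χ_L` for their quadratic characters and fix a nontrivial
additive character `ψ` of `K`. Counting square roots, the number of points is
`q^n + ∑ₓ χ_L(a·x·Tr x + b)`. Grouping `x` by `t = Tr x`, the fibre `t = 0` contributes
`q^{n-1} χ_L(b)`. For `t ≠ 0` the fibre is cut out by `q⁻¹ ∑_l ψ(l (Tr x - t))`; the substitution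
`u = a t x + b` costs nothing because `Tr(b/a) = 0`, and each of the `q - 1` fibres contributes
`χ_K(-1) χ_L(a) G_L G_K / q`, where `G_K`, `G_L` are the quadratic Gauss sums for `ψ` and `ψ ∘ Tr`.

Since `n` is odd, `χ_L` restricts to `χ_K` (the norm of a square root of `t ∈ K` is a square root of
`t^n`). Diagonalising the trace form of `L/K` gives `G_L = χ_K(disc) G_K^n`, and the discriminant is
a square in `L` (it is `det(σ_j(v_i))²`), hence in `K`. So
`G_L G_K = G_K^{n+1} = (χ_K(-1) q)^{(n+1)/2}`, and `χ_K(-1) = χ₄(p)^s = τ^{2s}`.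
-/

open Finset Module Algebra

lemma AddChar.map_sum_eq_prod {A M ι : Type*} [AddCommMonoid A] [CommMonoid M] (ψ : AddChar A M)
    (s : Finset ι) (f : ι → A) : ψ (∑ i ∈ s, f i) = ∏ i ∈ s, ψ (f i) := by
  classical
  induction s using Finset.induction_on with
  | empty => simp
  | insert i s hi ih => rw [sum_insert hi, prod_insert hi, map_add_eq_mul, ih]

lemma Algebra.trace_algebraMap_mul {R S : Type*} [CommRing R] [CommRing S] [Algebra R S] (r : R)
    (x : S) : trace R S (algebraMap R S r * x) = r * trace R S x := by
  rw [← Algebra.smul_def, map_smul, smul_eq_mul]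

lemma LinearMap.BilinForm.apply_sum_smul_self_of_isOrthoᵢ {R M ι : Type*} [CommSemiring R]
    [AddCommMonoid M] [Module R M] [Fintype ι] [DecidableEq ι] {B : LinearMap.BilinForm R M}
    {v : ι → M} (hv : B.IsOrthoᵢ v) (c : ι → R) :
    B (∑ i, c i • v i) (∑ i, c i • v i) = ∑ i, B (v i) (v i) * c i ^ 2 := by
  simp only [map_sum, map_smul, LinearMap.sum_apply, LinearMap.smul_apply, smul_eq_mul]
  refine sum_congr rfl fun i _ => ?_
  rw [sum_eq_single i (fun j _ hji => by rw [hv hji, mul_zero]) (by simp)]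
  ring

lemma MulChar.eq_of_ne_one_of_sq_eq_one {F R : Type*} [Field F] [Finite F] [CommRing R]
    [IsDomain R] {χ χ' : MulChar F R} (hχ : χ ≠ 1) (hχ' : χ' ≠ 1) (hχ2 : χ ^ 2 = 1)
    (hχ2' : χ' ^ 2 = 1) : χ = χ' := by
  obtain ⟨g, hg⟩ := IsCyclic.exists_generator (α := Fˣ)
  have apply_gen : ∀ η : MulChar F R, η ≠ 1 → η ^ 2 = 1 → η g = -1 := by
    intro η hη hη2
    have hsq : η g ^ 2 = 1 := by
      rw [← MulChar.pow_apply' η two_ne_zero, hη2, MulChar.one_apply_coe]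
    refine (sq_eq_one_iff.mp hsq).resolve_left fun h1 => hη ?_
    rw [MulChar.eq_iff hg, h1, MulChar.one_apply_coe]
  rw [MulChar.eq_iff hg, apply_gen χ hχ hχ2, apply_gen χ' hχ' hχ2']

lemma MulChar.IsQuadratic.map_inv {F R : Type*} [Field F] [CommRing R] {χ : MulChar F R}
    (hχ : χ.IsQuadratic) (a : F) : χ a⁻¹ = χ a := by
  rw [← MulChar.inv_apply', hχ.inv]

section GaussSum

variable {F R : Type*} [Field F] [Fintype F] [CommRing R] [IsDomain R]
  {χ : MulChar F R} (hχ : χ.IsQuadratic) (hχ1 : χ ≠ 1) (ψ : AddChar F R)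
include hχ hχ1

lemma MulChar.IsQuadratic.sum_mul_addChar_mul (w : F) :
    ∑ u, χ u * ψ (w * u) = χ w * gaussSum χ ψ := by
  rcases eq_or_ne w 0 with rfl | hw
  · simp [MulChar.sum_eq_zero_of_ne_one hχ1]
  · have h := gaussSum_mulShift_eq χ ψ (Units.mk0 w hw)
    rw [hχ.inv] at h
    simpa [gaussSum, AddChar.mulShift_apply] using h

lemma MulChar.IsQuadratic.sum_affine_mul_addChar {c : F} (hc : c ≠ 0) (b w : F) :
    ∑ x, χ (c * x + b) * ψ (w * x) = ψ (-(w * b / c)) * χ (w / c) * gaussSum χ ψ := by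
  have hsubst : ∀ u, χ (c * ((u - b) / c) + b) * ψ (w * ((u - b) / c))
      = ψ (-(w * b / c)) * (χ u * ψ (w / c * u)) := by
    intro u
    rw [mul_div_cancel₀ _ hc, sub_add_cancel, mul_left_comm, ← AddChar.map_add_eq_mul]
    congr 2
    field_simp
    ring
  rw [← (Equiv.subRight b |>.trans (Equiv.divRight₀ c hc)).sum_comp]
  simp only [Equiv.trans_apply, Equiv.subRight_apply, Equiv.divRight₀_apply, hsubst, ← mul_sum,
    hχ.sum_mul_addChar_mul hχ1, mul_assoc]

end GaussSum

lemma card_mul_sum_filter_eq_sum_addChar {K X : Type*} [Field K] [Fintype K] [DecidableEq K]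
    [Fintype X] {ψ : AddChar K ℂ} (hψ : ψ ≠ 1) (h : X → K) (g : X → ℂ) (t : K) :
    (Fintype.card K : ℂ) * ∑ x with h x = t, g x = ∑ l : K, ∑ x, g x * ψ (l * (h x - t)) := by
  rw [sum_comm, sum_filter, mul_sum]
  refine sum_congr rfl fun x _ => ?_
  simp only [← mul_sum, AddChar.sum_mulShift _ (AddChar.IsPrimitive.of_ne_one hψ), sub_eq_zero]
  split_ifs <;> simp [mul_comm]

noncomputable def complexQuadraticChar (F : Type*) [Field F] [Fintype F] [DecidableEq F] :
    MulChar F ℂ :=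
  (quadraticChar F).ringHomComp (Int.castRingHom ℂ)

section QuadraticChar

variable {F : Type*} [Field F] [Fintype F] [DecidableEq F]

lemma complexQuadraticChar_apply (a : F) : complexQuadraticChar F a = quadraticChar F a := rfl

lemma complexQuadraticChar_isQuadratic : (complexQuadraticChar F).IsQuadratic :=
  (quadraticChar_isQuadratic F).comp _

lemma complexQuadraticChar_ne_one (hF : ringChar F ≠ 2) : complexQuadraticChar F ≠ 1 :=
  (MulChar.ringHomComp_ne_one_iff (RingHom.injective_int _)).mpr (quadraticChar_ne_one hF)

lemma complexQuadraticChar_mul_self {a : F} (ha : a ≠ 0) :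
    complexQuadraticChar F a * complexQuadraticChar F a = 1 := by
  rw [← sq, complexQuadraticChar_apply]
  exact_mod_cast quadraticChar_sq_one ha

lemma complexQuadraticChar_neg_one (hF : ringChar F ≠ 2) :
    complexQuadraticChar F (-1) = ZMod.χ₄ (Fintype.card F) := by
  rw [complexQuadraticChar_apply, quadraticChar_neg_one hF]

lemma eq_complexQuadraticChar_of_orderOf_eq_two (hF : ringChar F ≠ 2) {χ : MulChar F ℂ}
    (hχ : orderOf χ = 2) : χ = complexQuadraticChar F :=
  MulChar.eq_of_ne_one_of_sq_eq_one (fun h => by simp [h] at hχ)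
    (complexQuadraticChar_ne_one hF) (hχ ▸ pow_orderOf_eq_one χ)
    complexQuadraticChar_isQuadratic.sq_eq_one

lemma complexQuadraticChar_card_sqrts (hF : ringChar F ≠ 2) (c : F) :
    (#{y : F | y ^ 2 = c} : ℂ) = 1 + complexQuadraticChar F c := by
  have h := quadraticChar_card_sqrts hF c
  rw [Set.toFinset_ofPred] at h
  rw [complexQuadraticChar_apply, add_comm]
  exact_mod_cast h

lemma natCard_sq_eq_fun (hF : ringChar F ≠ 2) (f : F → F) :
    (Nat.card {xy : F × F // xy.2 ^ 2 = f xy.1} : ℂ)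
      = Fintype.card F + ∑ x, complexQuadraticChar F (f x) := by
  rw [Nat.card_congr (Equiv.subtypeProdEquivSigmaSubtype fun x y => y ^ 2 = f x),
    Nat.card_eq_fintype_card, Fintype.card_sigma, Nat.cast_sum]
  simp only [Fintype.card_subtype, complexQuadraticChar_card_sqrts hF, sum_add_distrib, sum_const,
    card_univ, nsmul_eq_mul, mul_one]

lemma sum_addChar_mul_sq (hF : ringChar F ≠ 2) {ψ : AddChar F ℂ} (hψ : ψ ≠ 1) {w : F}
    (hw : w ≠ 0) :
    ∑ x, ψ (w * x ^ 2) = complexQuadraticChar F w * gaussSum (complexQuadraticChar F) ψ := by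
  have hfiber : ∑ x, ψ (w * x ^ 2) = ∑ u, (#{y : F | y ^ 2 = u} : ℂ) * ψ (w * u) := by
    rw [← sum_fiberwise univ (· ^ 2)]
    refine sum_congr rfl fun u _ => ?_
    rw [sum_congr rfl fun x hx => by rw [(mem_filter.mp hx).2], sum_const, nsmul_eq_mul]
  have hsum : ∑ u, ψ (w * u) = 0 := by
    simpa [AddChar.mulShift_apply] using
      AddChar.sum_eq_zero_of_ne_one (AddChar.IsPrimitive.of_ne_one hψ hw)
  simp only [hfiber, complexQuadraticChar_card_sqrts hF, add_mul, one_mul, sum_add_distrib, hsum,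
    zero_add, complexQuadraticChar_isQuadratic.sum_mul_addChar_mul (complexQuadraticChar_ne_one hF)]

lemma sum_addChar_weightedSumSquares (hF : ringChar F ≠ 2) {ψ : AddChar F ℂ} (hψ : ψ ≠ 1)
    {ι : Type*} [Fintype ι] [DecidableEq ι] {d : ι → F} (hd : ∀ i, d i ≠ 0) :
    ∑ c : ι → F, ψ (∑ i, d i * c i ^ 2)
      = complexQuadraticChar F (∏ i, d i)
        * gaussSum (complexQuadraticChar F) ψ ^ Fintype.card ι := by
  simp only [AddChar.map_sum_eq_prod]
  rw [← Fintype.prod_sum (fun i (c : F) => ψ (d i * c ^ 2)),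
    prod_congr rfl fun i _ => sum_addChar_mul_sq hF hψ (hd i), prod_mul_distrib, prod_const,
    map_prod, card_univ]

end QuadraticChar

lemma Algebra.isSquare_algebraMap_discr_of_isGalois {K L ι : Type*} [Field K] [Field L]
    [Algebra K L] [FiniteDimensional K L] [IsGalois K L] [Fintype ι] [DecidableEq ι]
    (b : Basis ι K L) : IsSquare (algebraMap K L (discr K b)) := by
  let e : ι ≃ (L ≃ₐ[K] L) := Fintype.equivOfCardEq <| by
    rw [← finrank_eq_card_basis b, ← IsGalois.card_aut_eq_finrank, Nat.card_eq_fintype_card]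
  let M : Matrix ι ι L := Matrix.of fun i k => e k (b i)
  have hM : (traceMatrix K b).map (algebraMap K L) = M * M.transpose := by
    ext i j
    simp only [Matrix.map_apply, traceMatrix_apply, traceForm_apply, trace_eq_sum_automorphisms,
      Matrix.mul_apply, Matrix.transpose_apply, M, Matrix.of_apply, map_mul]
    exact (Fintype.sum_equiv e _ _ fun _ => rfl).symm
  refine ⟨M.det, ?_⟩
  rw [discr_def, RingHom.map_det, RingHom.mapMatrix_apply, hM, Matrix.det_mul,
    Matrix.det_transpose]

section OddDegree

variable {K L : Type*} [Field K] [Field L] [Algebra K L] [FiniteDimensional K L]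

lemma isSquare_algebraMap_iff_of_odd_finrank (hn : Odd (finrank K L)) {t : K} :
    IsSquare (algebraMap K L t) ↔ IsSquare t := by
  refine ⟨fun ⟨y, hy⟩ => ?_, fun h => h.map _⟩
  rcases eq_or_ne t 0 with rfl | ht
  · exact IsSquare.zero
  obtain ⟨k, hk⟩ := hn
  have hnorm : IsSquare (t ^ finrank K L) :=
    ⟨Algebra.norm K y, by rw [← Algebra.norm_algebraMap, hy, map_mul]⟩
  have ht_eq : t = t ^ finrank K L * (t⁻¹ ^ k) ^ 2 := by
    rw [hk, inv_pow, inv_pow, pow_succ, ← pow_mul, mul_comm k, mul_right_comm,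
      mul_inv_cancel₀ (pow_ne_zero _ ht), one_mul]
  exact ht_eq ▸ hnorm.mul (IsSquare.sq _)

variable [Fintype K] [Fintype L] [DecidableEq K]

lemma quadraticChar_algebraMap_of_odd_finrank [DecidableEq L] (hn : Odd (finrank K L)) (t : K) :
    quadraticChar L (algebraMap K L t) = quadraticChar K t := by
  rcases eq_or_ne t 0 with rfl | ht
  · simp
  have ht' : algebraMap K L t ≠ 0 := (map_ne_zero _).mpr ht
  have hsq := isSquare_algebraMap_iff_of_odd_finrank (L := L) hn (t := t)
  by_cases h : IsSquare t
  · rw [(quadraticChar_one_iff_isSquare ht').mpr (hsq.mpr h),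
      (quadraticChar_one_iff_isSquare ht).mpr h]
  · rw [quadraticChar_neg_one_iff_not_isSquare.mpr (mt hsq.mp h),
      quadraticChar_neg_one_iff_not_isSquare.mpr h]

lemma complexQuadraticChar_algebraMap [DecidableEq L] (hn : Odd (finrank K L)) (t : K) :
    complexQuadraticChar L (algebraMap K L t) = complexQuadraticChar K t := by
  simp only [complexQuadraticChar_apply, quadraticChar_algebraMap_of_odd_finrank hn]

lemma quadraticChar_discr_of_odd_finrank (hn : Odd (finrank K L)) {ι : Type*} [Fintype ι]
    [DecidableEq ι] (b : Basis ι K L) : quadraticChar K (discr K b) = 1 :=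
  (quadraticChar_one_iff_isSquare (discr_not_zero_of_basis K b)).mpr
    ((isSquare_algebraMap_iff_of_odd_finrank hn).mp (isSquare_algebraMap_discr_of_isGalois b))

end OddDegree

noncomputable def AddChar.compTrace {K R : Type*} [Field K] [CommMonoid R] (L : Type*) [Field L]
    [Algebra K L] (ψ : AddChar K R) : AddChar L R :=
  ψ.compAddMonoidHom (trace K L).toAddMonoidHom

@[simp]
lemma AddChar.compTrace_apply {K R : Type*} [Field K] [CommMonoid R] {L : Type*} [Field L]
    [Algebra K L] (ψ : AddChar K R) (x : L) : ψ.compTrace L x = ψ (trace K L x) := rfl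

section FiniteFieldExtension

variable {K L : Type*} [Field K] [Field L] [Fintype K] [Fintype L] [Algebra K L]

lemma AddChar.compTrace_ne_one {R : Type*} [CommMonoid R] {ψ : AddChar K R} (hψ : ψ ≠ 1) :
    ψ.compTrace L ≠ 1 := by
  obtain ⟨t, ht⟩ := AddChar.ne_one_iff.mp hψ
  obtain ⟨x, rfl⟩ := trace_surjective K L t
  exact AddChar.ne_one_iff.mpr ⟨x, ht⟩

lemma card_trace_eq_zero [DecidableEq K] :
    #{x : L | trace K L x = 0} = Fintype.card K ^ (finrank K L - 1) := by
  have hker : finrank K (LinearMap.ker (trace K L)) = finrank K L - 1 := by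
    have h := LinearMap.finrank_range_add_finrank_ker (trace K L)
    rw [LinearMap.range_eq_top.mpr (trace_surjective K L), finrank_top, finrank_self] at h
    omega
  classical
  rw [← hker, ← card_eq_pow_finrank, ← Fintype.card_subtype]
  exact Fintype.card_congr (Equiv.refl _)

variable [DecidableEq K] [DecidableEq L] {ψ : AddChar K ℂ}

local notation "χK" => complexQuadraticChar K
local notation "χL" => complexQuadraticChar L

lemma gaussSum_compTrace (hK : ringChar K ≠ 2) (hn : Odd (finrank K L)) (hψ : ψ ≠ 1) :
    gaussSum χL (ψ.compTrace L) = gaussSum χK ψ ^ finrank K L := by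
  have hL : ringChar L ≠ 2 := Algebra.ringChar_eq K L ▸ hK
  have : Invertible (2 : K) := invertibleOfNonzero (Ring.two_ne_zero hK)
  obtain ⟨v, hv⟩ := (traceForm K L).exists_orthogonal_basis
    (LinearMap.BilinForm.isSymm_iff.mp (traceForm_isSymm K))
  set d : Fin (finrank K L) → K := fun i => traceForm K L (v i) (v i)
  have hdiscr : discr K v = ∏ i, d i := by
    have hdiag : traceMatrix K v = Matrix.diagonal d := by
      ext i j
      rcases eq_or_ne i j with rfl | hij
      · rw [traceMatrix_apply, Matrix.diagonal_apply_eq]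
      · rw [traceMatrix_apply, Matrix.diagonal_apply_ne _ hij, hv hij]
    rw [discr_def, hdiag, Matrix.det_diagonal]
  have hd : ∀ i, d i ≠ 0 := fun i =>
    prod_ne_zero_iff.mp (hdiscr ▸ discr_not_zero_of_basis K v) i (mem_univ i)
  calc gaussSum χL (ψ.compTrace L)
      = ∑ x, ψ.compTrace L (1 * x ^ 2) := by
        rw [sum_addChar_mul_sq hL (AddChar.compTrace_ne_one hψ) one_ne_zero, map_one, one_mul]
    _ = ∑ c : Fin (finrank K L) → K, ψ (∑ i, d i * c i ^ 2) := by
        rw [← v.equivFun.symm.toEquiv.sum_comp]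
        refine sum_congr rfl fun c _ => ?_
        rw [LinearEquiv.coe_toEquiv, Basis.equivFun_symm_apply, AddChar.compTrace_apply, one_mul,
          sq, ← traceForm_apply, LinearMap.BilinForm.apply_sum_smul_self_of_isOrthoᵢ hv]
    _ = gaussSum χK ψ ^ finrank K L := by
        rw [sum_addChar_weightedSumSquares hK hψ hd, ← hdiscr, complexQuadraticChar_apply,
          quadraticChar_discr_of_odd_finrank hn, Int.cast_one, one_mul, Fintype.card_fin]

lemma gaussSum_compTrace_mul_gaussSum (hK : ringChar K ≠ 2) (hn : Odd (finrank K L))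
    (hψ : ψ ≠ 1) :
    gaussSum χL (ψ.compTrace L) * gaussSum χK ψ
      = (χK (-1) * Fintype.card K) ^ ((finrank K L + 1) / 2) := by
  rw [gaussSum_compTrace hK hn hψ, ← pow_succ, ← gaussSum_sq (complexQuadraticChar_ne_one hK)
    complexQuadraticChar_isQuadratic (AddChar.IsPrimitive.of_ne_one hψ), ← pow_mul]
  congr 1
  obtain ⟨k, hk⟩ := hn
  omega

lemma sum_complexQuadraticChar_affine_mul_addChar_trace (hK : ringChar K ≠ 2)
    (hn : Odd (finrank K L)) {c : L} (hc : c ≠ 0) {b : L} (hb : trace K L (b / c) = 0) (l : K) :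
    ∑ x, χL (c * x + b) * ψ (l * trace K L x) = χK l * χL c * gaussSum χL (ψ.compTrace L) := by
  have hL : ringChar L ≠ 2 := Algebra.ringChar_eq K L ▸ hK
  have hshift : ψ.compTrace L (-(algebraMap K L l * b / c)) = 1 := by
    rw [AddChar.compTrace_apply, mul_div_assoc, map_neg, trace_algebraMap_mul, hb, mul_zero,
      neg_zero, AddChar.map_zero_eq_one]
  simp only [← trace_algebraMap_mul, ← AddChar.compTrace_apply]
  rw [complexQuadraticChar_isQuadratic.sum_affine_mul_addChar (complexQuadraticChar_ne_one hL)
      _ hc, hshift, one_mul, div_eq_mul_inv, map_mul, complexQuadraticChar_algebraMap hn,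
    complexQuadraticChar_isQuadratic.map_inv]

lemma card_mul_sum_trace_fiber (hK : ringChar K ≠ 2) (hn : Odd (finrank K L)) (hψ : ψ ≠ 1)
    {a : L} (ha : a ≠ 0) {b : L} (hB : trace K L (b / a) = 0) {t : K} (ht : t ≠ 0) :
    (Fintype.card K : ℂ) * ∑ x with trace K L x = t, χL (a * algebraMap K L t * x + b)
      = χK (-1) * χL a * gaussSum χL (ψ.compTrace L) * gaussSum χK ψ := by
  have hc : a * algebraMap K L t ≠ 0 := mul_ne_zero ha ((map_ne_zero _).mpr ht)
  have hb : trace K L (b / (a * algebraMap K L t)) = 0 := by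
    rw [div_mul_eq_div_div, div_eq_inv_mul _ (algebraMap K L t), ← map_inv₀,
      trace_algebraMap_mul, hB, mul_zero]
  have hsplit : ∀ (l : K) (x : L), ψ (l * (trace K L x - t)) = ψ (-t * l) * ψ (l * trace K L x) :=
    fun l x => by rw [← AddChar.map_add_eq_mul]; ring_nf
  have hsum : ∀ C : ℂ, ∑ l, ψ (-t * l) * (χK l * C) = χK (-t) * gaussSum χK ψ * C := fun C => by
    rw [← complexQuadraticChar_isQuadratic.sum_mul_addChar_mul (complexQuadraticChar_ne_one hK),
      sum_mul]
    exact sum_congr rfl fun _ _ => by ring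
  simp only [card_mul_sum_filter_eq_sum_addChar hψ, hsplit, mul_left_comm _ (ψ (-t * _)),
    ← mul_sum, sum_complexQuadraticChar_affine_mul_addChar_trace hK hn hc hb]
  simp only [mul_assoc]
  rw [hsum, map_mul, complexQuadraticChar_algebraMap hn, neg_eq_neg_one_mul t, map_mul]
  linear_combination (χK (-1) * χL a * gaussSum χL (ψ.compTrace L) * gaussSum χK ψ) *
    complexQuadraticChar_mul_self ht

end FiniteFieldExtension

lemma curveCard_two_eq {K L : Type} [Field K] [Field L] [Fintype K] [Fintype L] [Algebra K L]
    [DecidableEq K] [DecidableEq L] (hK : ringChar K ≠ 2) (hn : Odd (finrank K L)) {a : L}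
    (ha : a ≠ 0) {b : L} (hB : trace K L (b / a) = 0) :
    (curveCard K L 2 a b : ℂ)
      = (Fintype.card K : ℂ) ^ finrank K L
        + (Fintype.card K : ℂ) ^ (finrank K L - 1) * complexQuadraticChar L b
        + complexQuadraticChar K (-1) ^ ((finrank K L + 1) / 2) * complexQuadraticChar L (-a)
          * ((Fintype.card K : ℂ) - 1) * (Fintype.card K : ℂ) ^ ((finrank K L - 1) / 2) := by
  set χK := complexQuadraticChar K
  set χL := complexQuadraticChar L
  set q : ℂ := (Fintype.card K : ℂ) with hq_def
  have hL : ringChar L ≠ 2 := Algebra.ringChar_eq K L ▸ hK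
  have hq : q ≠ 0 := Nat.cast_ne_zero.mpr Fintype.card_ne_zero
  obtain ⟨ψ, hψ⟩ : ∃ ψ : AddChar K ℂ, ψ ≠ 1 := by
    obtain ⟨ψ, hψ⟩ := AddChar.exists_apply_ne_zero.mpr (one_ne_zero : (1 : K) ≠ 0)
    exact ⟨ψ, AddChar.ne_one_iff.mpr ⟨1, hψ⟩⟩
  have hfiber : ∑ x, χL (a * x * algebraMap K L (trace K L x) + b)
      = ∑ t, ∑ x with trace K L x = t, χL (a * algebraMap K L t * x + b) := by
    rw [← sum_fiberwise univ (trace K L)]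
    refine sum_congr rfl fun t _ => sum_congr rfl fun x hx => ?_
    rw [(mem_filter.mp hx).2, mul_right_comm]
  have hzero : ∑ x with trace K L x = 0, χL (a * algebraMap K L 0 * x + b)
      = q ^ (finrank K L - 1) * χL b := by
    simp only [map_zero, mul_zero, zero_mul, zero_add, sum_const, card_trace_eq_zero,
      nsmul_eq_mul, Nat.cast_pow, hq_def]
  have hnonzero : ∑ t ∈ univ.erase 0, ∑ x with trace K L x = t, χL (a * algebraMap K L t * x + b)
      = (q - 1) * (χK (-1) * χL a * gaussSum χL (ψ.compTrace L) * gaussSum χK ψ / q) := by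
    rw [sum_congr rfl fun t ht => eq_div_of_mul_eq hq <| (mul_comm _ _).trans <|
        card_mul_sum_trace_fiber hK hn hψ ha hB (ne_of_mem_erase ht),
      sum_const, card_erase_of_mem (mem_univ _), card_univ, nsmul_eq_mul,
      Nat.cast_sub Fintype.card_pos, Nat.cast_one]
  have hneg : χL (-a) = χK (-1) * χL a := by
    rw [neg_eq_neg_one_mul, map_mul, ← map_one (algebraMap K L), ← map_neg,
      complexQuadraticChar_algebraMap hn]
  rw [curveCard, natCard_sq_eq_fun hL fun x => a * x * algebraMap K L (trace K L x) + b,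
    card_eq_pow_finrank (K := K), hfiber, ← add_sum_erase _ _ (mem_univ 0), hzero, hnonzero,
    mul_assoc (χK (-1) * χL a), gaussSum_compTrace_mul_gaussSum hK hn hψ, hneg]
  obtain ⟨k, hk⟩ := hn
  rw [hk, show (2 * k + 1 + 1) / 2 = k + 1 by omega, show (2 * k + 1 - 1) / 2 = k by omega]
  push_cast
  field_simp
  ring

lemma tauC_sq {p : ℕ} (hp : Odd p) : tauC p ^ 2 = ZMod.χ₄ p := by
  have hp2 : p % 2 = 1 := Nat.odd_iff.mp hp
  rw [ZMod.χ₄_nat_eq_if_mod_four, tauC]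
  rcases (by omega : p % 4 = 1 ∨ p % 4 = 3) with h | h <;> simp [h, hp2]

theorem curve_d2_n_odd_B_zero_general (p s n : ℕ) (hp : Odd p)
    (q : ℕ) (hq : q = p ^ s)
    (Fq Fqn : Type) [Field Fq] [Field Fqn] [Fintype Fq] [Fintype Fqn] [Algebra Fq Fqn]
    (hcard : Fintype.card Fq = q) (hcardn : Fintype.card Fqn = q ^ n)
    (a : Fqn) (ha : a ≠ 0) (b : Fqn)
    (χ₂ : MulChar Fqn ℂ) (hχ : orderOf χ₂ = 2)
    (hnodd : Odd n) (hB : Algebra.trace Fq Fqn (b / a) = 0) :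
    (curveCard Fq Fqn 2 a b : ℂ)
      = (q : ℂ) ^ n + (q : ℂ) ^ (n - 1) * χ₂ b
        + tauC p ^ ((n + 1) * s) * χ₂ (-a) * ((q : ℂ) - 1) * (q : ℂ) ^ ((n - 1) / 2) := by
  classical
  have hK : ringChar Fq ≠ 2 := mt FiniteField.even_card_iff_char_two.mp <| by
    rw [hcard, hq, Nat.odd_iff.mp hp.pow]
    exact one_ne_zero
  have hfinrank : finrank Fq Fqn = n := by
    refine Nat.pow_right_injective (hcard ▸ Fintype.one_lt_card) ?_
    simp only [← hcard, ← card_eq_pow_finrank, hcardn]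
  obtain rfl := eq_complexQuadraticChar_of_orderOf_eq_two (Algebra.ringChar_eq Fq Fqn ▸ hK) hχ
  have htau : complexQuadraticChar Fq (-1) ^ ((n + 1) / 2) = tauC p ^ ((n + 1) * s) := by
    rw [complexQuadraticChar_neg_one hK, hcard, hq, Nat.cast_pow, map_pow, Int.cast_pow,
      ← tauC_sq hp, ← pow_mul, ← pow_mul]
    obtain ⟨k, rfl⟩ := hnodd
    rw [show (2 * k + 1 + 1) / 2 = k + 1 by omega]
    ring_nf
  rw [curveCard_two_eq hK (hfinrank ▸ hnodd) ha hB, hfinrank, htau, hcard]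

theorem curve_d2_n_odd_B_zero (p s n : ℕ) [Fact p.Prime] (hp : Odd p) (hs : 0 < s) (hn : 0 < n)
    (q : ℕ) (hq : q = p ^ s)
    (Fq Fqn : Type) [Field Fq] [Field Fqn] [Fintype Fq] [Fintype Fqn] [Algebra Fq Fqn]
    (hcard : Fintype.card Fq = q) (hcardn : Fintype.card Fqn = q ^ n)
    (a : Fqn) (ha : a ≠ 0) (b : Fqn)
    (χ₂ : MulChar Fqn ℂ) (hχ : orderOf χ₂ = 2)
    (hnodd : Odd n) (hB : Algebra.trace Fq Fqn (b / a) = 0) :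
    (curveCard Fq Fqn 2 a b : ℂ)
      = (q : ℂ) ^ n + (q : ℂ) ^ (n - 1) * χ₂ b
        + tauC p ^ ((n + 1) * s) * χ₂ (-a) * ((q : ℂ) - 1) * (q : ℂ) ^ ((n - 1) / 2) :=
  curve_d2_n_odd_B_zero_general p s n hp q hq Fq Fqn hcard hcardn a ha b χ₂ hχ hnodd hB
end
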